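/- arXiv:2412.07184 — 2 statements merged into one kernel-verified Lean document; each statement's English description precedes it below -/
import Mathlib

section
/- Let (Ω, F, P) be a probability space with random variables Y, W (W taking values in a measurable space), and set g₀(w) = E[Y | W = w]. Let m : Ω × L² → ℝ be such that g ↦ E[m(·; g)] is linear with Riesz representer α₀ ∈ L², i.e. E[m(Z; g)] = E[α₀(W) g(W)] for all square-integrable g. Define ψ(Z; α, g) = m(Z; g) + α(W)(Y − g(W)). Then for any fixed square-integrable functions ĝ, α̂: E[ψ(Z; α̂, ĝ)] − E[m(Z; g₀)] = −E[(α̂(W) − α₀(W))(ĝ(W) − g₀(W))]. -/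
open MeasureTheory

/-! Both the plug-in term and the correction term reduce to `L²` pairings with functions of `W`:
the Riesz property turns `M ĝ - M g₀` into `E[α₀ (ĝ - g₀)]`, and the tower property turns the
correction `E[α̂ (Y - ĝ)]` into `E[α̂ (g₀ - ĝ)]`. Their sum is `-E[(α̂ - α₀)(ĝ - g₀)]`. -/

theorem integral_mul_condExp_of_stronglyMeasurable_left {Ω : Type*} {m m0 : MeasurableSpace Ω}
    {μ : Measure Ω} (hm : m ≤ m0) [SigmaFinite (μ.trim hm)] {f g : Ω → ℝ}
    (hf : StronglyMeasurable[m] f) (hfg : Integrable (f * g) μ) (hg : Integrable g μ) :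
    ∫ ω, f ω * (μ[g | m]) ω ∂μ = ∫ ω, f ω * g ω ∂μ :=
  calc ∫ ω, f ω * (μ[g | m]) ω ∂μ = ∫ ω, (μ[f * g | m]) ω ∂μ :=
        integral_congr_ae (condExp_mul_of_stronglyMeasurable_left hf hfg hg).symm
    _ = ∫ ω, f ω * g ω ∂μ := integral_condExp hm

theorem integrable_mul_of_memLp_two {Ω : Type*} {m0 : MeasurableSpace Ω} {μ : Measure Ω}
    {f g : Ω → ℝ} (hf : MemLp f 2 μ) (hg : MemLp g 2 μ) :
    Integrable (fun ω => f ω * g ω) μ :=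
  hf.integrable_mul hg

theorem double_robustness_identity_general
    {Ω : Type*} {m0 : MeasurableSpace Ω} {μ : Measure Ω} [IsProbabilityMeasure μ]
    (𝔪 : MeasurableSpace Ω) (h𝔪 : 𝔪 ≤ m0)
    (Y : Ω → ℝ) (hY : MemLp Y 2 μ)
    (M : (Ω → ℝ) → ℝ) (α₀ ghat αhat : Ω → ℝ)
    (hα₀ : MemLp α₀ 2 μ) (hghat : MemLp ghat 2 μ) (hαhat : MemLp αhat 2 μ)
    (hghatm : StronglyMeasurable[𝔪] ghat)
    (hαhatm : StronglyMeasurable[𝔪] αhat)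
    (hRiesz : ∀ g : Ω → ℝ, MemLp g 2 μ → StronglyMeasurable[𝔪] g →
      M g = ∫ ω, α₀ ω * g ω ∂μ) :
    (M ghat + ∫ ω, αhat ω * (Y ω - ghat ω) ∂μ) - M (μ[Y | 𝔪]) =
      - ∫ ω, (αhat ω - α₀ ω) * (ghat ω - (μ[Y | 𝔪]) ω) ∂μ := by
  set g₀ := μ[Y | 𝔪]
  have hg₀ : MemLp g₀ 2 μ := hY.condExp one_le_two
  have hplugin : M ghat - M g₀ = ∫ ω, α₀ ω * (ghat ω - g₀ ω) ∂μ := by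
    rw [hRiesz ghat hghat hghatm, hRiesz g₀ hg₀ stronglyMeasurable_condExp,
      ← integral_sub (integrable_mul_of_memLp_two hα₀ hghat)
        (integrable_mul_of_memLp_two hα₀ hg₀)]
    simp only [mul_sub]
  have hcorrection :
      ∫ ω, αhat ω * (Y ω - ghat ω) ∂μ = ∫ ω, αhat ω * (g₀ ω - ghat ω) ∂μ := by
    have hαY := integrable_mul_of_memLp_two hαhat hY
    have hαghat := integrable_mul_of_memLp_two hαhat hghat
    simp only [mul_sub]
    rw [integral_sub hαY hαghat, integral_sub (integrable_mul_of_memLp_two hαhat hg₀) hαghat,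
      integral_mul_condExp_of_stronglyMeasurable_left h𝔪 hαhatm hαY (hY.integrable one_le_two)]
  calc (M ghat + ∫ ω, αhat ω * (Y ω - ghat ω) ∂μ) - M g₀
      = ∫ ω, α₀ ω * (ghat ω - g₀ ω) ∂μ + ∫ ω, αhat ω * (g₀ ω - ghat ω) ∂μ := by
        rw [← hplugin, hcorrection]; ring
    _ = ∫ ω, (α₀ ω * (ghat ω - g₀ ω) + αhat ω * (g₀ ω - ghat ω)) ∂μ :=
        (integral_add (integrable_mul_of_memLp_two hα₀ (hghat.sub hg₀))
          (integrable_mul_of_memLp_two hαhat (hg₀.sub hghat))).symm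
    _ = - ∫ ω, (αhat ω - α₀ ω) * (ghat ω - g₀ ω) ∂μ := by
        rw [← integral_neg]; congr 1 with ω; ring

/-- Double robustness identity. With `g₀ = E[Y | W]` (conditional expectation
with respect to the σ-algebra `𝔪` generated by `W`), a linear moment functional
`M g = E[m(Z;g)]` with Riesz representer `α₀` (i.e. `M g = E[α₀ g]` for square-integrable
`𝔪`-measurable `g`), and `ψ(Z;α,g) = m(Z;g) + α(W)(Y − g(W))`, for any fixed
square-integrable functions `ghat, αhat` of `W`:
`E[ψ(Z; αhat, ghat)] − E[m(Z; g₀)] = −E[(αhat − α₀)(ghat − g₀)]`. -/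
theorem double_robustness_identity
    {Ω : Type*} {m0 : MeasurableSpace Ω} {μ : Measure Ω} [IsProbabilityMeasure μ]
    (𝔪 : MeasurableSpace Ω) (h𝔪 : 𝔪 ≤ m0)
    (Y : Ω → ℝ) (hY : MemLp Y 2 μ)
    (M : (Ω → ℝ) → ℝ) (α₀ ghat αhat : Ω → ℝ)
    (hα₀ : MemLp α₀ 2 μ) (hghat : MemLp ghat 2 μ) (hαhat : MemLp αhat 2 μ)
    (hα₀m : StronglyMeasurable[𝔪] α₀)
    (hghatm : StronglyMeasurable[𝔪] ghat)
    (hαhatm : StronglyMeasurable[𝔪] αhat)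
    (hRiesz : ∀ g : Ω → ℝ, MemLp g 2 μ → StronglyMeasurable[𝔪] g →
      M g = ∫ ω, α₀ ω * g ω ∂μ) :
    (M ghat + ∫ ω, αhat ω * (Y ω - ghat ω) ∂μ) - M (μ[Y | 𝔪]) =
      - ∫ ω, (αhat ω - α₀ ω) * (ghat ω - (μ[Y | 𝔪]) ω) ∂μ :=
  double_robustness_identity_general 𝔪 h𝔪 Y hY M α₀ ghat αhat hα₀ hghat hαhat hghatm hαhatm hRiesz
end

section
/- With the setup of the doubly robust moment ψ(Z; α, g) = m(Z; g) + α(W)(Y − g(W)) where g₀(W) = E[Y|W] and α₀ is the Riesz representer of g ↦ E[m(Z; g)], the bias is bounded by the product of L² errors: |E[ψ(Z; α̂, ĝ)] − E[m(Z; g₀)]| ≤ ‖ĝ − g₀‖_{L²} · ‖α̂ − α₀‖_{L²}. -/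
/-!
Since `α̂` is `𝔪`-measurable, pulling it out of the conditional expectation gives
`∫ α̂ Y = ∫ α̂ g₀` with `g₀ = μ[Y | 𝔪]`. Together with the Riesz representation of `M` at `ĝ`
and `g₀`, this makes the bias exactly `-∫ (α̂ - α₀) (ĝ - g₀)`, and Cauchy–Schwarz in `L²(μ)`
bounds it by the product of the two `L²` errors.
-/

open MeasureTheory

section

variable {Ω : Type*} {m0 : MeasurableSpace Ω} {μ : Measure Ω}

theorem abs_integral_mul_le_sqrt_mul_sqrt {f g : Ω → ℝ} (hf : MemLp f 2 μ)
    (hg : MemLp g 2 μ) :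
    |∫ ω, f ω * g ω ∂μ| ≤ √(∫ ω, f ω ^ 2 ∂μ) * √(∫ ω, g ω ^ 2 ∂μ) := by
  have hholder := integral_mul_norm_le_Lp_mul_Lq Real.HolderConjugate.two_two
    (by simpa using hf) (by simpa using hg)
  simp only [Real.norm_eq_abs, Real.rpow_two, sq_abs, ← Real.sqrt_eq_rpow] at hholder
  calc |∫ ω, f ω * g ω ∂μ| ≤ ∫ ω, |f ω| * |g ω| ∂μ := by
        simpa only [abs_mul] using abs_integral_le_integral_abs (f := fun ω => f ω * g ω)
    _ ≤ _ := hholder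

theorem integral_sub_mul_sub {a b c d : Ω → ℝ} (ha : MemLp a 2 μ) (hb : MemLp b 2 μ)
    (hc : MemLp c 2 μ) (hd : MemLp d 2 μ) :
    ∫ ω, (a ω - b ω) * (c ω - d ω) ∂μ =
      ∫ ω, a ω * c ω ∂μ - ∫ ω, a ω * d ω ∂μ - ∫ ω, b ω * c ω ∂μ + ∫ ω, b ω * d ω ∂μ := by
  have hprod {f g : Ω → ℝ} (hf : MemLp f 2 μ) (hg : MemLp g 2 μ) :
      Integrable (fun ω => f ω * g ω) μ :=
    hf.integrable_mul hg
  simp only [sub_mul, mul_sub]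
  rw [integral_sub (f := fun ω => a ω * c ω - b ω * c ω) (g := fun ω => a ω * d ω - b ω * d ω)
      ((hprod ha hc).sub (hprod hb hc)) ((hprod ha hd).sub (hprod hb hd)),
    integral_sub (hprod ha hc) (hprod hb hc), integral_sub (hprod ha hd) (hprod hb hd)]
  ring

theorem integral_mul_condExp_of_stronglyMeasurable {m : MeasurableSpace Ω} (hm : m ≤ m0)
    [SigmaFinite (μ.trim hm)] {f Y : Ω → ℝ} (hf : StronglyMeasurable[m] f)
    (hfY : Integrable (f * Y) μ) (hY : Integrable Y μ) :
    ∫ ω, f ω * (μ[Y | m]) ω ∂μ = ∫ ω, f ω * Y ω ∂μ :=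
  (integral_congr_ae (condExp_mul_of_stronglyMeasurable_left hf hfY hY)).symm.trans
    (integral_condExp hm)

theorem doubly_robust_bias_eq [IsFiniteMeasure μ] {m : MeasurableSpace Ω} (hm : m ≤ m0)
    {Y : Ω → ℝ} (hY : MemLp Y 2 μ) {M : (Ω → ℝ) → ℝ} {α₀ ghat αhat : Ω → ℝ}
    (hα₀ : MemLp α₀ 2 μ) (hghat : MemLp ghat 2 μ) (hαhat : MemLp αhat 2 μ)
    (hghatm : StronglyMeasurable[m] ghat) (hαhatm : StronglyMeasurable[m] αhat)
    (hRiesz : ∀ g : Ω → ℝ, MemLp g 2 μ → StronglyMeasurable[m] g →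
      M g = ∫ ω, α₀ ω * g ω ∂μ) :
    (M ghat + ∫ ω, αhat ω * (Y ω - ghat ω) ∂μ) - M (μ[Y | m]) =
      -∫ ω, (αhat ω - α₀ ω) * (ghat ω - (μ[Y | m]) ω) ∂μ := by
  have hg₀ : MemLp (μ[Y | m]) 2 μ := hY.condExp one_le_two
  have horth : ∫ ω, αhat ω * (μ[Y | m]) ω ∂μ = ∫ ω, αhat ω * Y ω ∂μ :=
    integral_mul_condExp_of_stronglyMeasurable hm hαhatm (hαhat.integrable_mul hY)
      (hY.integrable one_le_two)
  have hresidual : ∫ ω, αhat ω * (Y ω - ghat ω) ∂μ =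
      ∫ ω, αhat ω * Y ω ∂μ - ∫ ω, αhat ω * ghat ω ∂μ := by
    simp only [mul_sub]
    exact integral_sub (hαhat.integrable_mul hY) (hαhat.integrable_mul hghat)
  rw [hRiesz ghat hghat hghatm, hRiesz _ hg₀ stronglyMeasurable_condExp, hresidual,
    integral_sub_mul_sub hαhat hα₀ hghat hg₀, horth]
  ring

end

theorem doubly_robust_bias_bound_general
    {Ω : Type*} {m0 : MeasurableSpace Ω} {μ : Measure Ω} [IsProbabilityMeasure μ]
    (𝔪 : MeasurableSpace Ω) (h𝔪 : 𝔪 ≤ m0)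
    (Y : Ω → ℝ) (hY : MemLp Y 2 μ)
    (M : (Ω → ℝ) → ℝ) (α₀ ghat αhat : Ω → ℝ)
    (hα₀ : MemLp α₀ 2 μ) (hghat : MemLp ghat 2 μ) (hαhat : MemLp αhat 2 μ)
    (hghatm : StronglyMeasurable[𝔪] ghat)
    (hαhatm : StronglyMeasurable[𝔪] αhat)
    (hRiesz : ∀ g : Ω → ℝ, MemLp g 2 μ → StronglyMeasurable[𝔪] g →
      M g = ∫ ω, α₀ ω * g ω ∂μ) :
    |(M ghat + ∫ ω, αhat ω * (Y ω - ghat ω) ∂μ) - M (μ[Y | 𝔪])| ≤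
      Real.sqrt (∫ ω, (ghat ω - (μ[Y | 𝔪]) ω) ^ 2 ∂μ) *
        Real.sqrt (∫ ω, (αhat ω - α₀ ω) ^ 2 ∂μ) := by
  rw [doubly_robust_bias_eq h𝔪 hY hα₀ hghat hαhat hghatm hαhatm hRiesz, abs_neg, mul_comm]
  exact abs_integral_mul_le_sqrt_mul_sqrt (hαhat.sub hα₀)
    (hghat.sub (hY.condExp one_le_two))

/-- Bias bound for the doubly robust moment: with `g₀ = E[Y|W]` and Riesz
representer `α₀` of the linear moment functional `M g = E[m(Z;g)]`,
`|E[ψ(Z;αhat,ghat)] − E[m(Z;g₀)]| ≤ ‖ghat − g₀‖_{L²} · ‖αhat − α₀‖_{L²}`. -/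
theorem doubly_robust_bias_bound
    {Ω : Type*} {m0 : MeasurableSpace Ω} {μ : Measure Ω} [IsProbabilityMeasure μ]
    (𝔪 : MeasurableSpace Ω) (h𝔪 : 𝔪 ≤ m0)
    (Y : Ω → ℝ) (hY : MemLp Y 2 μ)
    (M : (Ω → ℝ) → ℝ) (α₀ ghat αhat : Ω → ℝ)
    (hα₀ : MemLp α₀ 2 μ) (hghat : MemLp ghat 2 μ) (hαhat : MemLp αhat 2 μ)
    (hα₀m : StronglyMeasurable[𝔪] α₀)
    (hghatm : StronglyMeasurable[𝔪] ghat)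
    (hαhatm : StronglyMeasurable[𝔪] αhat)
    (hRiesz : ∀ g : Ω → ℝ, MemLp g 2 μ → StronglyMeasurable[𝔪] g →
      M g = ∫ ω, α₀ ω * g ω ∂μ) :
    |(M ghat + ∫ ω, αhat ω * (Y ω - ghat ω) ∂μ) - M (μ[Y | 𝔪])| ≤
      Real.sqrt (∫ ω, (ghat ω - (μ[Y | 𝔪]) ω) ^ 2 ∂μ) *
        Real.sqrt (∫ ω, (αhat ω - α₀ ω) ^ 2 ∂μ) :=
  doubly_robust_bias_bound_general 𝔪 h𝔪 Y hY M α₀ ghat αhat hα₀ hghat hαhat hghatm hαhatm hRiesz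
end
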